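/- Let S be a periodic semigroup with central idempotents. Then the map s ↦ s^ω assigning to each element its idempotent power is a semigroup homomorphism from S onto the semilattice E(S) of idempotents of S. -/

import Mathlib

/-!
In the monoid `cS` of an idempotent `c`, the only idempotent with a one-sided inverse is `c`; a
one-sided inverse of `u` passes to its powers, so `u^ω = c` whenever `u ∈ cS` is one-sidedly
invertible there. Moreover `(x c)^ω = x^ω c` for a central idempotent `c`. Write `e = a^ω`,
`f = b^ω`, `g = (ab)^ω`. Since `g` is a power of `ab`, `a g` is right and `b g` left invertible
in `gS`, so `e g = g = f g`. Since `e` is a power of `a`, `a e` is left invertible in `eS`,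
likewise `b f` in `fS`, so `(ab)(ef) = (ae)(bf)` is left invertible in `efS` and `g e f = e f`.
Together, `g = e f`.
-/

/-- `spow s n = s^(n+1)` in a semigroup. -/
def spow {S : Type*} [Semigroup S] (s : S) : ℕ → S
  | 0 => s
  | n + 1 => spow s n * s

section Spow

variable {S : Type*} [Semigroup S]

theorem spow_add (s : S) (m n : ℕ) : spow s (m + n + 1) = spow s m * spow s n := by
  induction n with
  | zero => rfl
  | succ n ih =>
    change spow s (m + n + 1) * s = spow s m * (spow s n * s)
    rw [ih, mul_assoc]

theorem spow_succ' (s : S) (n : ℕ) : spow s (n + 1) = s * spow s n := by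
  have h := spow_add s 0 n
  rwa [Nat.zero_add] at h

theorem Commute.spow_left {x c : S} (h : Commute x c) (n : ℕ) : Commute (spow x n) c := by
  induction n with
  | zero => exact h
  | succ n ih => exact ih.mul_left h

theorem spow_mul_of_commute {x c : S} (hxc : Commute x c) (hc : IsIdempotentElem c) (n : ℕ) :
    spow (x * c) n = spow x n * c := by
  induction n with
  | zero => rfl
  | succ n ih =>
    change spow (x * c) n * (x * c) = spow x n * x * c
    rw [ih, mul_assoc, hxc.symm.left_comm, hc.eq, mul_assoc]

theorem mul_spow_of_mul_eq {c u : S} (h : c * u = u) (n : ℕ) : c * spow u n = spow u n := by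
  induction n with
  | zero => exact h
  | succ n ih => rw [spow, ← mul_assoc, ih]

theorem spow_mul_of_mul_eq {c u : S} (h : u * c = u) (n : ℕ) : spow u n * c = spow u n := by
  induction n with
  | zero => exact h
  | succ n ih => rw [spow_succ', mul_assoc, ih]

theorem spow_mul_spow_of_mul_eq {c u v : S} (hcu : c * u = u) (hvu : v * u = c) (n : ℕ) :
    spow v n * spow u n = c := by
  induction n with
  | zero => exact hvu
  | succ n ih => rw [spow, spow_succ', mul_assoc, ← mul_assoc v, hvu, mul_spow_of_mul_eq hcu, ih]

theorem spow_mul_spow_of_mul_eq' {c u v : S} (huc : u * c = u) (huv : u * v = c) (n : ℕ) :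
    spow u n * spow v n = c := by
  induction n with
  | zero => exact huv
  | succ n ih =>
    rw [spow_succ', spow, mul_assoc, ← mul_assoc (spow u n), ih, ← mul_assoc, huc, huv]

end Spow

structure IsIdempotentPowerMap {S : Type*} [Semigroup S] (ω : S → S) : Prop where
  exists_eq_spow (s : S) : ∃ n, ω s = spow s n
  isIdempotentElem (s : S) : IsIdempotentElem (ω s)
  spow_eq (s : S) (n : ℕ) : IsIdempotentElem (spow s n) → spow s n = ω s

namespace IsIdempotentPowerMap

variable {S : Type*} [Semigroup S] {ω : S → S}

theorem eq_of_mul_eq_left (hω : IsIdempotentPowerMap ω) {c u v : S} (hcu : c * u = u)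
    (hvu : v * u = c) : ω u = c := by
  obtain ⟨n, hn⟩ := hω.exists_eq_spow u
  have hv : spow v n * ω u = c := hn ▸ spow_mul_spow_of_mul_eq hcu hvu n
  calc ω u = c * ω u := (hn ▸ mul_spow_of_mul_eq hcu n).symm
    _ = spow v n * ω u * ω u := by rw [hv]
    _ = c := by rw [mul_assoc, (hω.isIdempotentElem u).eq, hv]

theorem eq_of_mul_eq_right (hω : IsIdempotentPowerMap ω) {c u v : S} (huc : u * c = u)
    (huv : u * v = c) : ω u = c := by
  obtain ⟨n, hn⟩ := hω.exists_eq_spow u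
  have hv : ω u * spow v n = c := hn ▸ spow_mul_spow_of_mul_eq' huc huv n
  calc ω u = ω u * c := (hn ▸ spow_mul_of_mul_eq huc n).symm
    _ = ω u * (ω u * spow v n) := by rw [hv]
    _ = c := by rw [← mul_assoc, (hω.isIdempotentElem u).eq, hv]

theorem map_mul_of_commute (hω : IsIdempotentPowerMap ω) {x c : S} (hxc : Commute x c)
    (hc : IsIdempotentElem c) : ω (x * c) = ω x * c := by
  obtain ⟨n, hn⟩ := hω.exists_eq_spow x
  have hspow : spow (x * c) n = ω x * c := by rw [spow_mul_of_commute hxc hc, hn]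
  have hidem : IsIdempotentElem (ω x * c) :=
    .mul_of_commute (hn ▸ hxc.spow_left n) (hω.isIdempotentElem x) hc
  rw [← hspow] at hidem ⊢
  exact (hω.spow_eq _ n hidem).symm

theorem exists_mul_eq (hω : IsIdempotentPowerMap ω) (x : S) :
    ∃ w, w * x = ω x ∧ x * w = ω x := by
  obtain ⟨n, hn⟩ := hω.exists_eq_spow x
  have h : spow x (n + n + 1) = ω x := by rw [spow_add, ← hn, (hω.isIdempotentElem x).eq]
  exact ⟨spow x (n + n), h, (spow_succ' x _).symm.trans h⟩

theorem range_eq (hω : IsIdempotentPowerMap ω) : Set.range ω = {e | IsIdempotentElem e} := by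
  ext e
  refine ⟨?_, fun he => ⟨e, (hω.spow_eq e 0 he).symm⟩⟩
  rintro ⟨s, rfl⟩
  exact hω.isIdempotentElem s

theorem map_mul (hω : IsIdempotentPowerMap ω)
    (hcentral : ∀ e s : S, IsIdempotentElem e → Commute e s) (a b : S) :
    ω (a * b) = ω a * ω b := by
  have central (s t : S) : Commute (ω s) t := hcentral _ t (hω.isIdempotentElem s)
  have hg : IsIdempotentElem (ω (a * b)) := hω.isIdempotentElem _
  obtain ⟨w, hwab, habw⟩ := hω.exists_mul_eq (a * b)
  have heg : ω a * ω (a * b) = ω (a * b) := by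
    rw [← hω.map_mul_of_commute (central _ a).symm hg]
    refine hω.eq_of_mul_eq_right (v := b * w) (by rw [mul_assoc, hg.eq]) ?_
    rw [mul_assoc, (central _ _).eq, ← mul_assoc, ← mul_assoc a, habw, hg.eq]
  have hfg : ω b * ω (a * b) = ω (a * b) := by
    rw [← hω.map_mul_of_commute (central _ b).symm hg]
    refine hω.eq_of_mul_eq_left (v := w * a) ?_ ?_
    · rw [← mul_assoc, (central _ b).eq, mul_assoc, hg.eq]
    · rw [← mul_assoc, mul_assoc w, hwab, hg.eq]
  have hef : IsIdempotentElem (ω a * ω b) :=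
    .mul_of_commute (central a _) (hω.isIdempotentElem a) (hω.isIdempotentElem b)
  have hgef : ω (a * b) * (ω a * ω b) = ω a * ω b := by
    obtain ⟨v, hva, -⟩ := hω.exists_mul_eq a
    obtain ⟨v', hvb, -⟩ := hω.exists_mul_eq b
    rw [← hω.map_mul_of_commute ((central a _).mul_left (central b _)).symm hef]
    refine hω.eq_of_mul_eq_left (v := v' * v) ?_ ?_
    · rw [(hcentral _ _ hef).eq, mul_assoc, hef.eq]
    · calc v' * v * (a * b * (ω a * ω b)) = v' * (v * a * b) * (ω a * ω b) := by
            simp only [mul_assoc]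
        _ = v' * b * (ω a * (ω a * ω b)) := by
            rw [hva, (central a b).eq, ← mul_assoc v' b, mul_assoc (v' * b)]
        _ = ω a * ω b := by rw [hvb, ← mul_assoc, (central b _).eq, hef.eq]
  calc ω (a * b) = ω (a * b) * ω b := hfg.symm.trans (central b _).eq
    _ = ω a * ω (a * b) * ω b := by rw [heg]
    _ = ω a * ω b := by rw [(central a _).eq, mul_assoc, hgef]

end IsIdempotentPowerMap

/-- In a periodic semigroup with central idempotents, the map s ↦ s^ω taking
each element to its (unique) idempotent power is a semigroup homomorphism of S
onto the semilattice E(S) of idempotents. -/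
theorem stmt_19 (S : Type*) [Semigroup S] (ω : S → S)
    (hpow : ∀ s : S, ∃ n : ℕ, ω s = spow s n)
    (hidem : ∀ s : S, ω s * ω s = ω s)
    (huniq : ∀ (s : S) (n : ℕ), spow s n * spow s n = spow s n → spow s n = ω s)
    (hcentral : ∀ e s : S, e * e = e → e * s = s * e) :
    (∀ s t : S, ω (s * t) = ω s * ω t) ∧
    Set.range ω = {e : S | e * e = e} := by
  have hω : IsIdempotentPowerMap ω := ⟨hpow, hidem, huniq⟩
  exact ⟨hω.map_mul hcentral, hω.range_eq⟩
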